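/- Let a and b be real numbers with 0 < a < 1, b > 1, ab ≥ 1 and a(b + 1) < 2. Then the Weierstrass sine function S(x) = ∑_{n=0}^∞ aⁿ sin(bⁿπx) has differential coefficient +∞ at x = 0; that is, (S(h) − S(0))/h → +∞ as h → 0 through nonzero values. -/

import Mathlib

/-!
Write `S(x) = ∑ aⁿ sin(bⁿπx)`; it is odd, so it suffices to let `h → 0⁺`. Pick `N` with
`bᴺh ≤ 1/2 < bᴺ⁺¹h`. For `n ≤ N` Jordan's inequality gives `aⁿ sin(bⁿπh) ≥ 2h(ab)ⁿ`, and the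
tail is at least `-aᴺ⁺¹/(1-a) ≥ -2h(ab)ᴺ⁺¹/(1-a)`. Writing `G = ∑_{n ≤ N} (ab)ⁿ`, so that
`(ab)ᴺ⁺¹ = 1 + (ab-1)G`, this yields
`S(h)/h ≥ 2((1-a)G - (ab)ᴺ⁺¹)/(1-a) = 2((2 - a(b+1))G - 1)/(1-a)`,
and `G ≥ N + 1 → ∞` as `h → 0⁺` because `ab ≥ 1` and `a(b+1) < 2`.
-/

open Real Filter Topology Finset

lemma le_mul_geom_sum_sub_pow {r s : ℝ} (hr : 1 ≤ r) (hrs : r - 1 ≤ s) (n : ℕ) :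
    (s - (r - 1)) * n - 1 ≤ s * ∑ i ∈ range n, r ^ i - r ^ n := by
  have hsum : (n : ℝ) ≤ ∑ i ∈ range n, r ^ i := by
    simpa using card_nsmul_le_sum (range n) (r ^ ·) 1 fun i _ => one_le_pow₀ hr
  have hpow : r ^ n = (r - 1) * ∑ i ∈ range n, r ^ i + 1 := by
    rw [mul_comm, geom_sum_mul, sub_add_cancel]
  rw [hpow]
  linarith [mul_le_mul_of_nonneg_left hsum (sub_nonneg.2 hrs)]

lemma two_mul_le_sin_pi_mul {y : ℝ} (hy0 : 0 ≤ y) (hy1 : y ≤ 1 / 2) :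
    2 * y ≤ Real.sin (π * y) := by
  have h := le_sin_mul (x := 2 * y) (by positivity) (by linarith)
  rwa [show π / 2 * (2 * y) = π * y by ring] at h

noncomputable def weierstrassSin (a b x : ℝ) : ℝ :=
  ∑' n : ℕ, a ^ n * Real.sin (b ^ n * π * x)

namespace weierstrassSin

@[simp]
lemma zero_right (a b : ℝ) : weierstrassSin a b 0 = 0 := by
  simp [weierstrassSin]

lemma neg_right (a b x : ℝ) : weierstrassSin a b (-x) = -weierstrassSin a b x := by
  simp only [weierstrassSin, mul_neg, Real.sin_neg, tsum_neg]

lemma summable_terms {a : ℝ} (ha : |a| < 1) (b x : ℝ) :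
    Summable fun n : ℕ => a ^ n * Real.sin (b ^ n * π * x) := by
  refine (summable_geometric_of_lt_one (abs_nonneg a) ha).of_norm_bounded fun n => ?_
  simp only [norm_mul, norm_pow, Real.norm_eq_abs]
  exact mul_le_of_le_one_right (pow_nonneg (abs_nonneg a) n) (abs_sin_le_one _)

lemma sum_range_sub_le {a : ℝ} (ha0 : 0 ≤ a) (ha1 : a < 1) (b x : ℝ) (N : ℕ) :
    ∑ n ∈ range N, a ^ n * Real.sin (b ^ n * π * x) - a ^ N / (1 - a) ≤
      weierstrassSin a b x := by
  have hsum := summable_terms (by rwa [abs_of_nonneg ha0]) b x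
  have hgeom : Summable fun n : ℕ => a ^ (n + N) := by
    simpa only [pow_add] using (summable_geometric_of_lt_one ha0 ha1).mul_right (a ^ N)
  have htail :
      -(a ^ N / (1 - a)) ≤ ∑' n : ℕ, a ^ (n + N) * Real.sin (b ^ (n + N) * π * x) := by
    have hgeom_sum : ∑' n : ℕ, a ^ (n + N) = a ^ N / (1 - a) := by
      simp only [pow_add]
      rw [tsum_mul_right, tsum_geometric_of_lt_one ha0 ha1, inv_mul_eq_div]
    rw [← hgeom_sum, ← tsum_neg]
    refine hgeom.neg.tsum_le_tsum (fun n => ?_) ((summable_nat_add_iff N).2 hsum)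
    exact neg_le_of_abs_le <| by
      rw [abs_mul, abs_of_nonneg (by positivity)]
      exact mul_le_of_le_one_right (by positivity) (abs_sin_le_one _)
  rw [weierstrassSin, ← hsum.sum_add_tsum_nat_add N]
  linarith

lemma two_mul_pow_le_sum_range {a b x : ℝ} (ha : 0 ≤ a) (hb : 1 ≤ b) (hx : 0 ≤ x) {N : ℕ}
    (hN : b ^ N * x ≤ 1 / 2) :
    2 * x * ∑ n ∈ range (N + 1), (a * b) ^ n ≤
      ∑ n ∈ range (N + 1), a ^ n * Real.sin (b ^ n * π * x) := by
  rw [mul_sum]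
  refine sum_le_sum fun n hn => ?_
  have hbn : b ^ n * x ≤ 1 / 2 :=
    le_trans (mul_le_mul_of_nonneg_right
      (pow_le_pow_right₀ hb (Nat.lt_succ_iff.1 (mem_range.1 hn))) hx) hN
  have hsin := two_mul_le_sin_pi_mul (by positivity) hbn
  calc 2 * x * (a * b) ^ n = a ^ n * (2 * (b ^ n * x)) := by ring
    _ ≤ a ^ n * Real.sin (π * (b ^ n * x)) := by gcongr
    _ = a ^ n * Real.sin (b ^ n * π * x) := by ring_nf

lemma le_div_self_of_pow_mul_le {a b h : ℝ} (ha0 : 0 ≤ a) (ha1 : a < 1) (hb : 1 ≤ b)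
    (hab : 1 ≤ a * b) (hab2 : a * (b + 1) ≤ 2) (hh : 0 < h) {N : ℕ} (hN : b ^ N * h ≤ 1 / 2)
    (hN1 : 1 / 2 < b ^ (N + 1) * h) :
    2 * ((2 - a * (b + 1)) * (N + 1) - 1) / (1 - a) ≤ weierstrassSin a b h / h := by
  have hlow := sum_range_sub_le ha0 ha1 b h (N + 1)
  have hhead := two_mul_pow_le_sum_range ha0 hb hh.le hN
  have htail : a ^ (N + 1) ≤ 2 * h * (a * b) ^ (N + 1) := by
    calc a ^ (N + 1) ≤ a ^ (N + 1) * (2 * (b ^ (N + 1) * h)) :=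
          le_mul_of_one_le_right (by positivity) (by linarith)
      _ = 2 * h * (a * b) ^ (N + 1) := by ring
  have halg := le_mul_geom_sum_sub_pow hab (s := 1 - a) (by linarith) (N + 1)
  have h1a : 0 < 1 - a := by linarith
  rw [div_le_div_iff₀ h1a hh]
  push_cast at halg
  have hW := mul_le_mul_of_nonneg_left hlow h1a.le
  rw [mul_sub, mul_div_cancel₀ _ h1a.ne'] at hW
  linarith [mul_le_mul_of_nonneg_left halg (by positivity : (0 : ℝ) ≤ 2 * h),
    mul_le_mul_of_nonneg_left hhead h1a.le]

lemma tendsto_div_self_nhdsGT {a b : ℝ} (ha0 : 0 ≤ a) (ha1 : a < 1) (hb : 1 < b)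
    (hab : 1 ≤ a * b) (hab2 : a * (b + 1) < 2) :
    Tendsto (fun h => weierstrassSin a b h / h) (𝓝[>] 0) atTop := by
  have h1a : 0 < 1 - a := by linarith
  have hc : 0 < 2 - a * (b + 1) := by linarith
  refine tendsto_atTop.2 fun M => ?_
  obtain ⟨N₀, hN₀⟩ := exists_nat_ge ((M * (1 - a) / 2 + 1) / (2 - a * (b + 1)))
  rw [div_le_iff₀ hc] at hN₀
  filter_upwards [Ioo_mem_nhdsGT (by positivity : (0 : ℝ) < 1 / 2 / b ^ N₀)]
    with h ⟨hh, hhN₀⟩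
  rw [lt_div_iff₀ (by positivity), mul_comm, ← lt_div_iff₀ hh] at hhN₀
  obtain ⟨N, hN, hN1⟩ := exists_nat_pow_near (one_le_pow₀ hb.le |>.trans hhN₀.le) hb
  have hN₀N : (N₀ : ℝ) ≤ N + 1 := by
    exact_mod_cast ((pow_lt_pow_iff_right₀ hb).1 (hhN₀.trans hN1)).le
  rw [le_div_iff₀ hh] at hN
  rw [div_lt_iff₀ hh] at hN1
  refine le_trans ?_ (le_div_self_of_pow_mul_le ha0 ha1 hb.le hab hab2.le hh hN hN1)
  rw [le_div_iff₀ h1a]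
  linarith [mul_le_mul_of_nonneg_left hN₀N hc.le]

end weierstrassSin

/-- Hardy's theorem: for `0 < a < 1`, `b > 1` with `a * b ≥ 1` and `a(b+1) < 2`,
the Weierstrass sine function has differential coefficient `+∞` at `x = 0`. -/
theorem weierstrass_sin_deriv_infinite_at_zero
    (a b : ℝ) (ha0 : 0 < a) (ha1 : a < 1) (hb : 1 < b) (hab : 1 ≤ a * b)
    (hab2 : a * (b + 1) < 2) :
    Tendsto (fun h : ℝ =>
        ((∑' n : ℕ, a ^ n * Real.sin (b ^ n * π * h)) -
          ∑' n : ℕ, a ^ n * Real.sin (b ^ n * π * 0)) / h)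
      (𝓝[≠] 0) atTop := by
  change Tendsto (fun h => (weierstrassSin a b h - weierstrassSin a b 0) / h) _ _
  have hpos := weierstrassSin.tendsto_div_self_nhdsGT ha0.le ha1 hb hab hab2
  have hneg := hpos.comp (by simpa using tendsto_neg_nhdsLT (a := (0 : ℝ)))
  simp only [weierstrassSin.zero_right, sub_zero, ← nhdsLT_sup_nhdsGT, tendsto_sup]
  refine ⟨hneg.congr fun h => ?_, hpos⟩
  simp only [Function.comp_apply, weierstrassSin.neg_right, neg_div_neg_eq]
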